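/- arXiv:1503.08084 — 4 statements merged into one kernel-verified Lean document; each statement's English description precedes it below -/
import Mathlib

section
/- Let V, W be real vector spaces, S ⊆ V, C the convex hull of S, and f : C → W convex-linear on S (i.e., f(Σ aᵢvᵢ) = Σ aᵢ f(vᵢ) for all convex combinations of elements vᵢ ∈ S). Then f has a unique extension to the affine hull of S that preserves affine combinations. -/
open Finset

/-!
If two affine combinations of points of `S` coincide, `∑ aᵢ vᵢ = ∑ bⱼ wⱼ`, moving the negative
coefficients to the other side gives two nonnegative combinations with the same point and the
same total weight `s`. Dividing by `s` (when `s ≠ 0`) turns them into convex combinations, so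
convex-linearity gives `∑ aᵢ f(vᵢ) = ∑ bⱼ f(wⱼ)`. Hence `g(∑ aᵢ vᵢ) := ∑ aᵢ f(vᵢ)` is well defined
on the affine hull, and it is the only candidate: every point of the affine hull is an affine
combination of points of `S`, where any extension agrees with `f`.
-/

/-- `f` is convex-linear on `S`: it sends convex combinations of elements of `S`
to the corresponding combinations of values. -/
def IsConvexLinearOn {V W : Type*} [AddCommGroup V] [Module ℝ V]
    [AddCommGroup W] [Module ℝ W] (S : Set V) (f : V → W) : Prop :=
  ∀ (n : ℕ) (a : Fin n → ℝ) (v : Fin n → V),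
    (∀ i, v i ∈ S) → (∀ i, 0 ≤ a i) → (∑ i, a i) = 1 →
      f (∑ i, a i • v i) = ∑ i, a i • f (v i)

/-- `g` preserves affine combinations of elements of `S`. -/
def IsAffineLinearOn {V W : Type*} [AddCommGroup V] [Module ℝ V]
    [AddCommGroup W] [Module ℝ W] (S : Set V) (g : V → W) : Prop :=
  ∀ (n : ℕ) (a : Fin n → ℝ) (v : Fin n → V),
    (∀ i, v i ∈ S) → (∑ i, a i) = 1 →
      g (∑ i, a i • v i) = ∑ i, a i • g (v i)


section

variable {V W : Type*} [AddCommGroup V] [Module ℝ V] [AddCommGroup W] [Module ℝ W]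
  {S : Set V} {f : V → W}

theorem sum_smul_eq_sum_smul_iff_posPart_negPart {ι κ M : Type*} [Fintype ι] [Fintype κ]
    [AddCommGroup M] [Module ℝ M] (a : ι → ℝ) (b : κ → ℝ) (x : ι → M) (y : κ → M) :
    ∑ i, a i • x i = ∑ j, b j • y j ↔
      ∑ i, (a i)⁺ • x i + ∑ j, (b j)⁻ • y j = ∑ j, (b j)⁺ • y j + ∑ i, (a i)⁻ • x i := by
  simp only [← sub_eq_sub_iff_add_eq_add, ← sum_sub_distrib, ← sub_smul, posPart_sub_negPart]

theorem IsConvexLinearOn.map_sum (hf : IsConvexLinearOn S f) {ι : Type*} [Fintype ι]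
    {a : ι → ℝ} {v : ι → V} (hv : ∀ i, v i ∈ S) (ha₀ : ∀ i, 0 ≤ a i) (ha₁ : ∑ i, a i = 1) :
    f (∑ i, a i • v i) = ∑ i, a i • f (v i) := by
  let e := (Fintype.equivFin ι).symm
  simpa only [Function.comp_apply, e.sum_comp (fun i => a i • v i),
    e.sum_comp (fun i => a i • f (v i))] using
    hf _ (a ∘ e) (v ∘ e) (fun _ => hv _) (fun _ => ha₀ _) (by simpa [e.sum_comp a] using ha₁)

theorem IsConvexLinearOn.sum_smul_eq_smul (hf : IsConvexLinearOn S f) {ι : Type*} [Fintype ι]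
    {a : ι → ℝ} {v : ι → V} (hv : ∀ i, v i ∈ S) (ha : ∀ i, 0 ≤ a i) :
    ∑ i, a i • f (v i) = (∑ i, a i) • f ((∑ i, a i)⁻¹ • ∑ i, a i • v i) := by
  rcases (sum_nonneg fun i _ => ha i).eq_or_lt with hs | hs
  · obtain rfl : a = 0 := (Fintype.sum_eq_zero_iff_of_nonneg ha).mp hs.symm
    simp
  · have ha' : ∀ i, 0 ≤ (∑ j, a j)⁻¹ * a i := fun i => mul_nonneg (inv_nonneg.mpr hs.le) (ha i)
    calc ∑ i, a i • f (v i)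
        = (∑ j, a j) • ∑ i, ((∑ j, a j)⁻¹ * a i) • f (v i) := by
          simp only [mul_smul, ← smul_sum, smul_inv_smul₀ hs.ne']
      _ = (∑ j, a j) • f (∑ i, ((∑ j, a j)⁻¹ * a i) • v i) := by
          rw [hf.map_sum hv ha' (by rw [← mul_sum, inv_mul_cancel₀ hs.ne'])]
      _ = _ := by simp only [mul_smul, ← smul_sum]

theorem IsConvexLinearOn.sum_smul_eq_of_nonneg (hf : IsConvexLinearOn S f)
    {ι κ : Type*} [Fintype ι] [Fintype κ] {a : ι → ℝ} {b : κ → ℝ} {v : ι → V} {w : κ → V}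
    (hv : ∀ i, v i ∈ S) (hw : ∀ j, w j ∈ S) (ha : ∀ i, 0 ≤ a i) (hb : ∀ j, 0 ≤ b j)
    (hab : ∑ i, a i = ∑ j, b j) (h : ∑ i, a i • v i = ∑ j, b j • w j) :
    ∑ i, a i • f (v i) = ∑ j, b j • f (w j) := by
  rw [hf.sum_smul_eq_smul hv ha, hf.sum_smul_eq_smul hw hb, hab, h]

theorem IsConvexLinearOn.sum_smul_eq_of_sum_smul_eq (hf : IsConvexLinearOn S f)
    {ι κ : Type*} [Fintype ι] [Fintype κ] {a : ι → ℝ} {b : κ → ℝ} {v : ι → V} {w : κ → V}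
    (hv : ∀ i, v i ∈ S) (hw : ∀ j, w j ∈ S)
    (hab : ∑ i, a i = ∑ j, b j) (h : ∑ i, a i • v i = ∑ j, b j • w j) :
    ∑ i, a i • f (v i) = ∑ j, b j • f (w j) := by
  have hab' := (sum_smul_eq_sum_smul_iff_posPart_negPart a b (fun _ => (1 : ℝ)) (fun _ => 1)).mp
    (by simpa using hab)
  rw [sum_smul_eq_sum_smul_iff_posPart_negPart] at h ⊢
  simpa [Fintype.sum_sum_type] using hf.sum_smul_eq_of_nonneg
    (a := Sum.elim (fun i => (a i)⁺) (fun j => (b j)⁻)) (v := Sum.elim v w)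
    (b := Sum.elim (fun j => (b j)⁺) (fun i => (a i)⁻)) (w := Sum.elim w v)
    (Sum.forall.mpr ⟨hv, hw⟩) (Sum.forall.mpr ⟨hw, hv⟩)
    (Sum.forall.mpr ⟨fun _ => posPart_nonneg _, fun _ => negPart_nonneg _⟩)
    (Sum.forall.mpr ⟨fun _ => posPart_nonneg _, fun _ => negPart_nonneg _⟩)
    (by simpa [Fintype.sum_sum_type] using hab') (by simpa [Fintype.sum_sum_type] using h)

theorem exists_fin_sum_smul_eq_of_mem_convexHull {x : V} (hx : x ∈ convexHull ℝ S) :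
    ∃ (n : ℕ) (a : Fin n → ℝ) (v : Fin n → V), (∀ i, v i ∈ S) ∧ (∀ i, 0 ≤ a i) ∧
      ∑ i, a i = 1 ∧ ∑ i, a i • v i = x := by
  obtain ⟨ι, _, a, v, ha₀, ha₁, hv, rfl⟩ := mem_convexHull_iff_exists_fintype.mp hx
  let e := (Fintype.equivFin ι).symm
  exact ⟨_, a ∘ e, v ∘ e, fun _ => hv _, fun _ => ha₀ _, by simpa [e.sum_comp a] using ha₁,
    e.sum_comp (fun i => a i • v i)⟩

theorem exists_fin_sum_smul_eq_of_mem_affineSpan {x : V} (hx : x ∈ affineSpan ℝ S) :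
    ∃ (n : ℕ) (a : Fin n → ℝ) (v : Fin n → V), (∀ i, v i ∈ S) ∧
      ∑ i, a i = 1 ∧ ∑ i, a i • v i = x := by
  rw [← Subtype.range_coe (s := S)] at hx
  obtain ⟨s, w, hw, rfl⟩ := eq_affineCombination_of_mem_affineSpan hx
  let e := s.equivFin.symm
  refine ⟨_, fun i => w (e i), fun i => (e i : S), fun i => (e i : S).2, ?_, ?_⟩
  · rwa [e.sum_comp (fun i => w i), sum_coe_sort]
  · rw [affineCombination_eq_linear_combination s _ w hw, e.sum_comp (fun i => w i • (i : V)),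
      sum_coe_sort s (fun i => w i • (i : V))]

-- At most one element, by `IsConvexLinearOn.sum_smul_eq_of_sum_smul_eq`.
def affineValues (S : Set V) (f : V → W) (x : V) : Set W :=
  {y | ∃ (n : ℕ) (a : Fin n → ℝ) (v : Fin n → V), (∀ i, v i ∈ S) ∧ ∑ i, a i = 1 ∧
    ∑ i, a i • v i = x ∧ ∑ i, a i • f (v i) = y}

noncomputable def affineExtension (S : Set V) (f : V → W) (x : V) : W :=
  Classical.epsilon (· ∈ affineValues S f x)

theorem affineExtension_sum_smul (hf : IsConvexLinearOn S f) {n : ℕ} {a : Fin n → ℝ}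
    {v : Fin n → V} (hv : ∀ i, v i ∈ S) (ha : ∑ i, a i = 1) :
    affineExtension S f (∑ i, a i • v i) = ∑ i, a i • f (v i) := by
  obtain ⟨m, b, w, hw, hb, hx, hy⟩ := Classical.epsilon_spec
    (p := (· ∈ affineValues S f (∑ i, a i • v i))) ⟨_, n, a, v, hv, ha, rfl, rfl⟩
  rw [affineExtension, ← hy]
  exact hf.sum_smul_eq_of_sum_smul_eq hw hv (hb.trans ha.symm) hx

theorem affineExtension_of_mem (hf : IsConvexLinearOn S f) {x : V} (hx : x ∈ S) :
    affineExtension S f x = f x := by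
  simpa using affineExtension_sum_smul hf (a := fun _ : Fin 1 => 1) (fun _ => hx) (by simp)

theorem isAffineLinearOn_affineExtension (hf : IsConvexLinearOn S f) :
    IsAffineLinearOn S (affineExtension S f) := by
  intro n a v hv ha
  simp only [affineExtension_sum_smul hf hv ha, affineExtension_of_mem hf (hv _)]

theorem affineExtension_eqOn_convexHull (hf : IsConvexLinearOn S f) :
    Set.EqOn (affineExtension S f) f (convexHull ℝ S) := by
  intro x hx
  obtain ⟨n, a, v, hv, ha₀, ha₁, rfl⟩ := exists_fin_sum_smul_eq_of_mem_convexHull hx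
  rw [affineExtension_sum_smul hf hv ha₁, hf n a v hv ha₀ ha₁]

theorem IsAffineLinearOn.eqOn_affineSpan {g g' : V → W} (hg : IsAffineLinearOn S g)
    (hg' : IsAffineLinearOn S g') (h : Set.EqOn g g' S) :
    Set.EqOn g g' (affineSpan ℝ S) := by
  intro x hx
  obtain ⟨n, a, v, hv, ha, rfl⟩ := exists_fin_sum_smul_eq_of_mem_affineSpan hx
  simp only [hg n a v hv ha, hg' n a v hv ha, h (hv _)]

end

/-- A function convex-linear on `S` (defined on the convex hull of `S`) has a
unique extension to the affine hull of `S` preserving affine combinations. -/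
theorem convexLinear_unique_affine_extension
    {V W : Type*} [AddCommGroup V] [Module ℝ V] [AddCommGroup W] [Module ℝ W]
    (S : Set V) (f : V → W) (hf : IsConvexLinearOn S f) :
    ∃ g : V → W, IsAffineLinearOn S g ∧
      (∀ x ∈ convexHull ℝ S, g x = f x) ∧
      ∀ g' : V → W, IsAffineLinearOn S g' → (∀ x ∈ convexHull ℝ S, g' x = f x) →
        ∀ x ∈ affineSpan ℝ S, g' x = g x := by
  refine ⟨affineExtension S f, isAffineLinearOn_affineExtension hf,
    fun x hx => affineExtension_eqOn_convexHull hf hx, fun g' hg' hg'f x hx => ?_⟩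
  refine hg'.eqOn_affineSpan (isAffineLinearOn_affineExtension hf) (fun y hy => ?_) hx
  rw [hg'f y (subset_convexHull ℝ S hy), affineExtension_of_mem hf hy]
end

section
/- Let V, W be real vector spaces, S ⊆ V with convex hull C and affine hull A, and f : C → W convex-linear on S. Then there exist u₀ ∈ A, w₀ ∈ W, a linear subspace L ⊆ V with A = u₀ + L, and a linear map h : L → W such that f(v) = w₀ + h(v − u₀) for all v ∈ C. -/
/-!
Fix `u₀ ∈ S`. Every linear relation `∑ lₛ • (s - u₀) = 0` among points of `S` is respected by `f`,
i.e. `∑ lₛ • (f s - f u₀) = 0`: after splitting `l` into its positive and negative parts and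
scaling both down, the two sides of the relation become convex combinations of `u₀` and points
of `S` describing the same point, on which `f` agrees. Hence `s - u₀ ↦ f s - f u₀` extends to a
linear map `h` on the span `L` of `S - u₀`, the direction of the affine hull, and
convex-linearity gives `f v = f u₀ + h (v - u₀)` on the convex hull.
-/

open Finset

theorem LinearMap.exists_comp_rangeRestrict_eq_of_ker_le {R M N P : Type*} [Ring R]
    [AddCommGroup M] [Module R M] [AddCommGroup N] [Module R N] [AddCommGroup P] [Module R P]
    {T : M →ₗ[R] N} {G : M →ₗ[R] P} (hTG : LinearMap.ker T ≤ LinearMap.ker G) :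
    ∃ g : LinearMap.range T →ₗ[R] P, g ∘ₗ T.rangeRestrict = G :=
  ⟨(LinearMap.ker T).liftQ G hTG ∘ₗ T.quotKerEquivRange.symm.toLinearMap, by
    ext x
    exact congrArg _ (T.quotKerEquivRange_symm_apply_image x (T.mem_range_self x))⟩

theorem AffineSubspace.coe_eq_image_add_direction {k V : Type*} [Ring k] [AddCommGroup V]
    [Module k V] {s : AffineSubspace k V} {p : V} (hp : p ∈ s) :
    (s : Set V) = (fun v => p + v) '' (s.direction : Set V) := by
  rw [AffineSubspace.coe_direction_eq_vsub_set_right hp, Set.image_image]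
  simp [vsub_eq_sub]

theorem range_linearCombination_sub_eq_vectorSpan {k V : Type*} [Ring k] [AddCommGroup V]
    [Module k V] {S : Set V} {u : V} (hu : u ∈ S) :
    LinearMap.range (Finsupp.linearCombination k fun s : S => (s : V) - u) = vectorSpan k S := by
  rw [Finsupp.range_linearCombination, vectorSpan_eq_span_vsub_set_right k hu, Set.image_eq_range]
  rfl

namespace IsConvexLinearOn

variable {V W : Type*} [AddCommGroup V] [Module ℝ V] [AddCommGroup W] [Module ℝ W]
  {S : Set V} {f : V → W}

theorem map_sum_smul (hf : IsConvexLinearOn S f) {ι : Type*} [Fintype ι] {w : ι → ℝ}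
    {z : ι → V} (hz : ∀ i, z i ∈ S) (hw₀ : ∀ i, 0 ≤ w i) (hw₁ : ∑ i, w i = 1) :
    f (∑ i, w i • z i) = ∑ i, w i • f (z i) := by
  let e := (Fintype.equivFin ι).symm
  have hfin := hf _ (w ∘ e) (z ∘ e) (fun _ => hz _) (fun _ => hw₀ _)
    (by rwa [Function.comp_def, e.sum_comp w])
  simpa only [Function.comp_apply, e.sum_comp (fun i => w i • z i),
    e.sum_comp (fun i => w i • f (z i))] using hfin

theorem map_add_sum_smul_sub (hf : IsConvexLinearOn S f) {u : V} (hu : u ∈ S) {ι : Type*}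
    [Fintype ι] {z : ι → V} (hz : ∀ i, z i ∈ S) {q : ι → ℝ} (hq₀ : ∀ i, 0 ≤ q i)
    (hq₁ : ∑ i, q i ≤ 1) :
    f (u + ∑ i, q i • (z i - u)) = f u + ∑ i, q i • (f (z i) - f u) := by
  have hcomb := hf.map_sum_smul (w := fun o : Option ι => o.elim (1 - ∑ i, q i) q)
    (z := fun o : Option ι => o.elim u z)
    (by rintro (_ | i) <;> simp [hu, hz]) (by rintro (_ | i) <;> simp [hq₁, hq₀])
    (by simp [Fintype.sum_option])
  simp only [Fintype.sum_option, Option.elim] at hcomb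
  have hpoint : u + ∑ i, q i • (z i - u) = (1 - ∑ i, q i) • u + ∑ i, q i • z i := by
    simp only [smul_sub, sum_sub_distrib, ← sum_smul]; module
  have hvalue : f u + ∑ i, q i • (f (z i) - f u) = (1 - ∑ i, q i) • f u + ∑ i, q i • f (z i) := by
    simp only [smul_sub, sum_sub_distrib, ← sum_smul]; module
  rwa [hpoint, hvalue]

theorem sum_smul_sub_eq_of_sum_smul_sub_eq (hf : IsConvexLinearOn S f) {u : V} (hu : u ∈ S)
    {ι : Type*} [Fintype ι] {z : ι → V} (hz : ∀ i, z i ∈ S) {p n : ι → ℝ}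
    (hp : 0 ≤ p) (hn : 0 ≤ n)
    (hpn : ∑ i, p i • (z i - u) = ∑ i, n i • (z i - u)) :
    ∑ i, p i • (f (z i) - f u) = ∑ i, n i • (f (z i) - f u) := by
  set M := 1 + ∑ i, p i + ∑ i, n i
  have hM : 0 < M := by
    have := Fintype.sum_nonneg hp
    have := Fintype.sum_nonneg hn
    positivity
  have scaled : ∀ q : ι → ℝ, 0 ≤ q → ∑ i, q i ≤ M →
      f (u + M⁻¹ • ∑ i, q i • (z i - u)) = f u + M⁻¹ • ∑ i, q i • (f (z i) - f u) := by
    intro q hq₀ hqM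
    have hq := hf.map_add_sum_smul_sub hu hz (q := fun i => M⁻¹ * q i)
      (fun i => mul_nonneg (inv_nonneg.2 hM.le) (hq₀ i))
      (by rw [← mul_sum]; exact inv_mul_le_one_of_le₀ hqM hM.le)
    simpa only [smul_sum, smul_smul] using hq
  have hpM : ∑ i, p i ≤ M := by have := Fintype.sum_nonneg hn; linarith
  have hnM : ∑ i, n i ≤ M := by have := Fintype.sum_nonneg hp; linarith
  have hf_eq := (scaled p hp hpM).symm.trans (hpn ▸ scaled n hn hnM)
  exact smul_right_injective W (inv_ne_zero hM.ne') (add_left_cancel hf_eq)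

theorem sum_smul_sub_eq_zero (hf : IsConvexLinearOn S f) {u : V} (hu : u ∈ S)
    {ι : Type*} [Fintype ι] {z : ι → V} (hz : ∀ i, z i ∈ S) {l : ι → ℝ}
    (hl : ∑ i, l i • (z i - u) = 0) :
    ∑ i, l i • (f (z i) - f u) = 0 := by
  have hV : ∑ i, l i • (z i - u) = ∑ i, (l i)⁺ • (z i - u) - ∑ i, (l i)⁻ • (z i - u) := by
    simp only [← sum_sub_distrib, ← sub_smul, posPart_sub_negPart]
  have hW : ∑ i, l i • (f (z i) - f u)
      = ∑ i, (l i)⁺ • (f (z i) - f u) - ∑ i, (l i)⁻ • (f (z i) - f u) := by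
    simp only [← sum_sub_distrib, ← sub_smul, posPart_sub_negPart]
  rw [hV, sub_eq_zero] at hl
  rw [hW, sub_eq_zero]
  exact hf.sum_smul_sub_eq_of_sum_smul_sub_eq hu hz (fun i => posPart_nonneg (l i))
    (fun i => negPart_nonneg (l i)) hl

theorem ker_linearCombination_sub_le (hf : IsConvexLinearOn S f) {u : V} (hu : u ∈ S) :
    LinearMap.ker (Finsupp.linearCombination ℝ fun s : S => (s : V) - u) ≤
      LinearMap.ker (Finsupp.linearCombination ℝ fun s : S => f s - f u) := by
  intro l hl
  simp only [LinearMap.mem_ker, Finsupp.linearCombination_apply, Finsupp.sum,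
    ← l.support.sum_coe_sort] at hl ⊢
  exact hf.sum_smul_sub_eq_zero hu (z := fun s : l.support => ((s : S) : V))
    (fun s => (s : S).2) hl

theorem exists_linearCombination_eq_of_mem_convexHull (hf : IsConvexLinearOn S f) (u : V)
    {v : V} (hv : v ∈ convexHull ℝ S) :
    ∃ l : S →₀ ℝ, Finsupp.linearCombination ℝ (fun s : S => (s : V) - u) l = v - u ∧
      Finsupp.linearCombination ℝ (fun s : S => f s - f u) l = f v - f u := by
  obtain ⟨ι, _, w, z, hw₀, hw₁, hz, rfl⟩ := mem_convexHull_iff_exists_fintype.1 hv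
  refine ⟨∑ i, Finsupp.single ⟨z i, hz i⟩ (w i), ?_, ?_⟩
  · simp [Finsupp.linearCombination_single, smul_sub, sum_sub_distrib, ← sum_smul, hw₁]
  · simp [hf.map_sum_smul hz hw₀ hw₁, Finsupp.linearCombination_single, smul_sub,
      sum_sub_distrib, ← sum_smul, hw₁]

end IsConvexLinearOn

/-- A function convex-linear on `S` is translated-linear on the convex hull `C`:
there are `u₀` in the affine hull `A` of `S`, `w₀ ∈ W`, a linear subspace `L`
with `A = u₀ + L`, and a linear map `h : L → W` with `f v = w₀ + h (v - u₀)`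
for all `v ∈ C`. -/
theorem convexLinear_translatedLinear
    {V W : Type*} [AddCommGroup V] [Module ℝ V] [AddCommGroup W] [Module ℝ W]
    (S : Set V) (f : V → W) (hf : IsConvexLinearOn S f) (hS : S.Nonempty) :
    ∃ (u₀ : V) (w₀ : W) (L : Submodule ℝ V) (h : L →ₗ[ℝ] W),
      u₀ ∈ affineSpan ℝ S ∧
      (affineSpan ℝ S : Set V) = (fun v => u₀ + v) '' (L : Set V) ∧
      ∀ v ∈ convexHull ℝ S, ∃ hv : v - u₀ ∈ L, f v = w₀ + h ⟨v - u₀, hv⟩ := by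
  obtain ⟨u₀, hu₀⟩ := hS
  set T := Finsupp.linearCombination ℝ fun s : S => (s : V) - u₀
  obtain ⟨h, hh⟩ :=
    LinearMap.exists_comp_rangeRestrict_eq_of_ker_le (hf.ker_linearCombination_sub_le hu₀)
  have hA : u₀ ∈ affineSpan ℝ S := subset_affineSpan ℝ S hu₀
  refine ⟨u₀, f u₀, LinearMap.range T, h, hA, ?_, fun v hv => ?_⟩
  · rw [range_linearCombination_sub_eq_vectorSpan hu₀, ← direction_affineSpan]
    exact AffineSubspace.coe_eq_image_add_direction hA
  · obtain ⟨l, hTl, hGl⟩ := hf.exists_linearCombination_eq_of_mem_convexHull u₀ hv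
    have hvL : v - u₀ ∈ LinearMap.range T := hTl ▸ LinearMap.mem_range_self T l
    refine ⟨hvL, ?_⟩
    have hrestrict : (⟨v - u₀, hvL⟩ : LinearMap.range T) = T.rangeRestrict l :=
      Subtype.ext hTl.symm
    rw [hrestrict, ← LinearMap.comp_apply, hh, hGl, add_sub_cancel]
end

section
/- Let f : C → W be convex-linear on S where C = conv(S). If two affine combinations Σᵢ aᵢsᵢ and Σⱼ bⱼtⱼ of elements of S are equal as vectors (with Σᵢ aᵢ = Σⱼ bⱼ = 1), then Σᵢ aᵢ f(sᵢ) = Σⱼ bⱼ f(tⱼ). Equivalently, the affine hull of the graph of f restricted to S is the graph of a function. -/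
open Finset

/-! Write `Σ aᵢ sᵢ - Σ bⱼ tⱼ = 0` as a single combination `Σ wₖ vₖ = 0` with `Σ wₖ = 0`.
Splitting `w` into positive and negative parts gives two nonnegative combinations of the
`vₖ` with the same total mass and the same value; after rescaling by that mass both are convex
combinations, so convex-linearity sends them to the same point of `W`. -/

theorem sum_smul_eq_sum_posPart_smul_sub_sum_negPart_smul {ι M : Type*} [Fintype ι]
    [AddCommGroup M] [Module ℝ M] (w : ι → ℝ) (x : ι → M) :
    ∑ i, w i • x i = ∑ i, (w i)⁺ • x i - ∑ i, (w i)⁻ • x i := by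
  simp only [← sum_sub_distrib, ← sub_smul, posPart_sub_negPart]

namespace IsConvexLinearOn

variable {V W : Type*} [AddCommGroup V] [Module ℝ V] [AddCommGroup W] [Module ℝ W]
  {S : Set V} {f : V → W} {k : ℕ} {v : Fin k → V}

theorem map_inv_smul_sum (hf : IsConvexLinearOn S f) (hv : ∀ i, v i ∈ S)
    {c : Fin k → ℝ} (hc : ∀ i, 0 ≤ c i) (hc₀ : ∑ i, c i ≠ 0) :
    f ((∑ i, c i)⁻¹ • ∑ i, c i • v i) = (∑ i, c i)⁻¹ • ∑ i, c i • f (v i) := by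
  have hconvex := hf k (fun i => (∑ i, c i)⁻¹ * c i) v hv
    (fun i => mul_nonneg (inv_nonneg.mpr (sum_nonneg fun i _ => hc i)) (hc i))
    (by rw [← mul_sum, inv_mul_cancel₀ hc₀])
  simpa only [mul_smul, ← smul_sum] using hconvex

theorem sum_smul_eq_of_nonneg_s7 (hf : IsConvexLinearOn S f) (hv : ∀ i, v i ∈ S)
    {c d : Fin k → ℝ} (hc : ∀ i, 0 ≤ c i) (hd : ∀ i, 0 ≤ d i)
    (hmass : ∑ i, c i = ∑ i, d i) (hsum : ∑ i, c i • v i = ∑ i, d i • v i) :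
    ∑ i, c i • f (v i) = ∑ i, d i • f (v i) := by
  by_cases hc₀ : ∑ i, c i = 0
  · have hc' : ∀ i, c i = 0 := by
      simpa using (sum_eq_zero_iff_of_nonneg fun i _ => hc i).mp hc₀
    have hd₀ : ∑ i, d i = 0 := hmass ▸ hc₀
    have hd' : ∀ i, d i = 0 := by
      simpa using (sum_eq_zero_iff_of_nonneg fun i _ => hd i).mp hd₀
    simp [hc', hd']
  · have hd₀ : ∑ i, d i ≠ 0 := hmass ▸ hc₀
    have hmap := hf.map_inv_smul_sum hv hc hc₀
    rw [hmass, hsum, hf.map_inv_smul_sum hv hd hd₀] at hmap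
    exact smul_right_injective W (inv_ne_zero hd₀) hmap.symm

theorem sum_smul_eq_zero (hf : IsConvexLinearOn S f) (hv : ∀ i, v i ∈ S)
    {w : Fin k → ℝ} (hw : ∑ i, w i = 0) (hwv : ∑ i, w i • v i = 0) :
    ∑ i, w i • f (v i) = 0 := by
  have hmass : ∑ i, (w i)⁺ = ∑ i, (w i)⁻ := by
    rwa [← sub_eq_zero, ← sum_sub_distrib, sum_congr rfl fun i _ => posPart_sub_negPart (w i)]
  rw [sum_smul_eq_sum_posPart_smul_sub_sum_negPart_smul, sub_eq_zero] at hwv ⊢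
  exact hf.sum_smul_eq_of_nonneg_s7 hv (fun i => posPart_nonneg _) (fun i => negPart_nonneg _)
    hmass hwv

end IsConvexLinearOn

/-- If two affine combinations of elements of `S` are equal as vectors, then the
corresponding combinations of values of a convex-linear `f` are equal; i.e. the
affine hull of the graph of `f` restricted to `S` is the graph of a function. -/
theorem convexLinear_affineCombination_welldefined
    {V W : Type*} [AddCommGroup V] [Module ℝ V] [AddCommGroup W] [Module ℝ W]
    (S : Set V) (f : V → W) (hf : IsConvexLinearOn S f)
    {m n : ℕ} (a : Fin m → ℝ) (s : Fin m → V) (b : Fin n → ℝ) (t : Fin n → V)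
    (hs : ∀ i, s i ∈ S) (ht : ∀ j, t j ∈ S)
    (ha : (∑ i, a i) = 1) (hb : (∑ j, b j) = 1)
    (heq : (∑ i, a i • s i) = ∑ j, b j • t j) :
    (∑ i, a i • f (s i)) = ∑ j, b j • f (t j) := by
  have hv : ∀ k, Fin.append s t k ∈ S := Fin.addCases (by simpa using hs) (by simpa using ht)
  have hzero := hf.sum_smul_eq_zero (w := Fin.append a (-b)) hv
    (by simp [Fin.sum_univ_add, ha, hb]) (by simp [Fin.sum_univ_add, heq])
  simpa [Fin.sum_univ_add, sub_eq_zero, ← sub_eq_add_neg] using hzero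
end

section
/- Let (Λ, ν) be a measure space and let A⃗, B⃗ : Λ → ℝ³, C : Λ → ℝ be measurable functions satisfying: (i) ∫ Bᵢ(λ)Aⱼ(λ) dν = δᵢⱼ for i, j ∈ {1,2,3}; (ii) ∫ C dν = 1; (iii) ‖B⃗(λ)‖ ≤ 1 for all λ; (iv) ‖A⃗(λ)‖ ≤ C(λ) for all λ. Then a contradiction follows; i.e., no such functions exist. -/
open MeasureTheory

/-!
Summing condition (i) over the diagonal gives `∫ ⟪B⃗, A⃗⟫ dν = 3`, while Cauchy–Schwarz with
(iii) and (iv) bounds the integrand pointwise by `‖B⃗‖ ‖A⃗‖ ≤ C`, whose integral is `1`.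
-/

lemma EuclideanSpace.sum_mul_le_norm_mul_norm {ι : Type*} [Fintype ι]
    (x y : EuclideanSpace ℝ ι) : ∑ i, x i * y i ≤ ‖x‖ * ‖y‖ := by
  have hinner : ∑ i, x i * y i = inner ℝ y x := by
    simp [PiLp.inner_apply]
  exact hinner ▸ (real_inner_le_norm y x).trans_eq (mul_comm _ _)

theorem card_le_integral_of_integral_diag_eq_one {ι Λ : Type*} [Fintype ι] [MeasurableSpace Λ]
    {ν : Measure Λ} {A B : Λ → EuclideanSpace ℝ ι} {C : Λ → ℝ}
    (hBA : ∀ i, ∫ l, B l i * A l i ∂ν = 1) (hC : Integrable C ν)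
    (hBle : ∀ l, ‖B l‖ ≤ 1) (hAle : ∀ l, ‖A l‖ ≤ C l) :
    (Fintype.card ι : ℝ) ≤ ∫ l, C l ∂ν := by
  have hdiag (i : ι) : Integrable (fun l ↦ B l i * A l i) ν :=
    integrable_of_integral_eq_one (hBA i)
  have htrace : ∫ l, ∑ i, B l i * A l i ∂ν = Fintype.card ι := by
    simp [integral_finsetSum _ fun i _ ↦ hdiag i, hBA]
  have hpointwise (l : Λ) : ∑ i, B l i * A l i ≤ C l :=
    calc ∑ i, B l i * A l i ≤ ‖B l‖ * ‖A l‖ := EuclideanSpace.sum_mul_le_norm_mul_norm _ _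
      _ ≤ 1 * C l := mul_le_mul (hBle l) (hAle l) (norm_nonneg _) zero_le_one
      _ = C l := one_mul _
  exact htrace ▸ integral_mono (integrable_finsetSum _ fun i _ ↦ hdiag i) hC hpointwise

theorem no_go_core_general
    {Λ : Type*} [MeasurableSpace Λ] (ν : Measure Λ)
    (A B : Λ → EuclideanSpace ℝ (Fin 3)) (C : Λ → ℝ)
    (hBA : ∀ i j : Fin 3,
      (∫ l, B l i * A l j ∂ν) = if i = j then (1 : ℝ) else 0)
    (hCint : (∫ l, C l ∂ν) = 1)
    (hBle : ∀ l, ‖B l‖ ≤ 1)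
    (hAle : ∀ l, ‖A l‖ ≤ C l) :
    False := by
  have hthree : ((Fintype.card (Fin 3) : ℕ) : ℝ) ≤ ∫ l, C l ∂ν :=
    card_le_integral_of_integral_diag_eq_one (fun i ↦ by simpa using hBA i i)
      (integrable_of_integral_eq_one hCint) hBle hAle
  rw [hCint, Fintype.card_fin] at hthree
  norm_num at hthree

/-- The analytic core of Spekkens's no-go theorem for a qubit: no measurable
`A⃗, B⃗ : Λ → ℝ³` and `C : Λ → ℝ` satisfy
`∫ Bᵢ Aⱼ dν = δᵢⱼ`, `∫ C dν = 1`, `‖B⃗‖ ≤ 1` and `‖A⃗‖ ≤ C` pointwise. -/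
theorem no_go_core
    {Λ : Type*} [MeasurableSpace Λ] (ν : Measure Λ)
    (A B : Λ → EuclideanSpace ℝ (Fin 3)) (C : Λ → ℝ)
    (hA : Measurable A) (hB : Measurable B) (hC : Measurable C)
    (hBA : ∀ i j : Fin 3,
      (∫ l, B l i * A l j ∂ν) = if i = j then (1 : ℝ) else 0)
    (hCint : (∫ l, C l ∂ν) = 1)
    (hBle : ∀ l, ‖B l‖ ≤ 1)
    (hAle : ∀ l, ‖A l‖ ≤ C l) :
    False :=
  no_go_core_general ν A B C hBA hCint hBle hAle
end
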